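/- For a prime p, an integer a ≥ 1, and x ∈ [0,1), let A = [p^{-a}⌊p^a x⌋, p^{-a}⌊p^a x⌋ + p^{-a}). Then ∑_{k=0}^{p^a − 1} e^{2πi φ_p(k)(φ_p^+(x) − φ_p^+(t))} equals p^a if t ∈ A and 0 if t ∈ [0,1) \ A, where φ_p is the radical inverse (Monna) map and φ_p^+ its inverse (using finite expansions for p-adic rationals). -/

import Mathlib

/-- The `r`-th base-`p` digit of `x ∈ [0,1)` (finite expansion for `p`-adic rationals). -/
noncomputable def padDigit (p : ℕ) (x : ℝ) (r : ℕ) : ℕ := ⌊x * (p : ℝ) ^ (r + 1)⌋.toNat % p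

/-- The inverse Monna map `φ_p^+ : [0,1) → ℤ_p`, sending
`x = ∑ x_r p^{-(r+1)}` (finite expansion for `p`-adic rationals) to `∑ x_r p^r`. -/
noncomputable def phiPlus (p : ℕ) [Fact p.Prime] (x : ℝ) : ℤ_[p] :=
  ∑' r : ℕ, (padDigit p x r : ℤ_[p]) * (p : ℤ_[p]) ^ r

/-- The radical inverse function `φ_p : ℕ → [0,1)` in base `p`. -/
noncomputable def radInv (p : ℕ) (k : ℕ) : ℝ :=
  ∑ i ∈ Finset.range (Nat.log p k + 1), (k / p ^ i % p : ℕ) / (p : ℝ) ^ (i + 1)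

/-- The `p`-adic character `χ_k(z) = e^{2πi φ_p(k) z}`, where the product
`φ_p(k)·z` is taken modulo one: since `φ_p(k)` has denominator `p^a` with
`a = log_p k + 1`, only `z` modulo `p^a` (its approximation `z.appr a`) matters. -/
noncomputable def padChar (p : ℕ) [Fact p.Prime] (k : ℕ) (z : ℤ_[p]) : ℂ :=
  Complex.exp (2 * Real.pi * Complex.I *
    (radInv p k * (z.appr (Nat.log p k + 1) : ℝ)))

/-- The `p`-adic function `β_k(x) = χ_k(φ_p^+(x))`. -/
noncomputable def padBeta (p : ℕ) [Fact p.Prime] (k : ℕ) (x : ℝ) : ℂ :=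
  padChar p k (phiPlus p x)

/-- The Monna map `φ_p : ℤ_p → [0,1)`, sending `∑ z_r p^r` to `∑ z_r p^{-(r+1)} (mod 1)`. -/
noncomputable def monna (p : ℕ) [Fact p.Prime] (z : ℤ_[p]) : ℝ :=
  Int.fract (∑' r : ℕ, ((z.appr (r + 1) / p ^ r : ℕ) : ℝ) / (p : ℝ) ^ (r + 1))

/-- The `p`-adic shift `x ⊕_p σ = φ_p(φ_p^+(x) + φ_p^+(σ))`. -/
noncomputable def oplus (p : ℕ) [Fact p.Prime] (x σ : ℝ) : ℝ :=
  monna p (phiPlus p x + phiPlus p σ)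

/-- The inverse `p`-adic shift `x ⊖_p σ = φ_p(φ_p^+(x) - φ_p^+(σ))`. -/
noncomputable def ominus (p : ℕ) [Fact p.Prime] (x σ : ℝ) : ℝ :=
  monna p (phiPlus p x - phiPlus p σ)

/-!
Put `z = φ_p^+(x) - φ_p^+(t)` and let `m < p^a` be its residue modulo `p^a`. For `k < p^a`,
`p^a φ_p(k)` is the integer `rev k` obtained by reversing the `a` base-`p` digits of `k`, so the
`k`-th summand is `ζ ^ (rev k * m)` with `ζ = e^{2πi/p^a}`. Since `rev` permutes `[0, p^a)`, the
sum is `∑_{j < p^a} ζ^(j m)`, which is `p^a` if `m = 0` and `0` otherwise. Finally `rev` sends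
`⌊p^a x⌋` to the truncation `∑_{r<a} x_r p^r` of `φ_p^+(x)`, so `m = 0` iff
`⌊p^a x⌋ = ⌊p^a t⌋`, i.e. iff `t ∈ A`.
-/

section

open Finset Complex

def revDigits (p n k : ℕ) : ℕ := ∑ i ∈ range n, k / p ^ i % p * p ^ (n - 1 - i)

def digitRevPerm (p n : ℕ) : Equiv.Perm (Fin (p ^ n)) :=
  finFunctionFinEquiv.symm.trans
    ((Equiv.arrowCongr Fin.revPerm (Equiv.refl (Fin p))).trans finFunctionFinEquiv)

theorem digitRevPerm_val (p n : ℕ) (k : Fin (p ^ n)) :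
    (digitRevPerm p n k : ℕ) = revDigits p n k := by
  rw [revDigits, ← sum_range_reflect, ← Fin.sum_univ_eq_sum_range]
  simp only [digitRevPerm, Equiv.trans_apply, Equiv.arrowCongr_apply, Fin.revPerm_symm,
    finFunctionFinEquiv_apply, Function.comp_apply, Equiv.refl_apply, Fin.revPerm_apply,
    finFunctionFinEquiv_symm_apply_val, Fin.val_rev]
  refine Fintype.sum_congr _ _ fun i => ?_
  rw [show n - (i + 1) = n - 1 - i by omega, show n - 1 - (n - 1 - i) = (i : ℕ) by omega]

theorem sum_range_revDigits {M : Type*} [AddCommMonoid M] (p n : ℕ) (f : ℕ → M) :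
    ∑ k ∈ range (p ^ n), f (revDigits p n k) = ∑ k ∈ range (p ^ n), f k := by
  rw [← Fin.sum_univ_eq_sum_range, ← Fin.sum_univ_eq_sum_range]
  simp_rw [← digitRevPerm_val]
  exact Equiv.sum_comp (digitRevPerm p n) fun k => f k

theorem revDigits_lt {p n k : ℕ} (hk : k < p ^ n) : revDigits p n k < p ^ n := by
  simpa [digitRevPerm_val] using (digitRevPerm p n ⟨k, hk⟩).isLt

theorem revDigits_inj {p n k l : ℕ} (hk : k < p ^ n) (hl : l < p ^ n) :
    revDigits p n k = revDigits p n l ↔ k = l := by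
  rw [← digitRevPerm_val p n ⟨k, hk⟩, ← digitRevPerm_val p n ⟨l, hl⟩, ← Fin.ext_iff,
    (digitRevPerm p n).injective.eq_iff, Fin.ext_iff]

theorem radInv_eq_sum_range {p n k : ℕ} (hp : 1 < p) (hk : k < p ^ n) :
    radInv p k = ∑ i ∈ range n, (k / p ^ i % p : ℕ) / (p : ℝ) ^ (i + 1) := by
  have hL : k < p ^ (Nat.log p k + 1) := Nat.lt_pow_succ_log_self hp k
  have vanish : ∀ m, k < p ^ m → ∀ i ∈ range (max (Nat.log p k + 1) n), i ∉ range m →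
      ((k / p ^ i % p : ℕ) : ℝ) / (p : ℝ) ^ (i + 1) = 0 := fun m hm i _ hi => by
    rw [Nat.div_eq_of_lt (hm.trans_le (Nat.pow_le_pow_right hp.le (by simpa using hi)))]
    simp
  rw [radInv, sum_subset (range_subset_range.2 (le_max_left _ n)) (vanish _ hL),
    ← sum_subset (range_subset_range.2 (le_max_right _ n)) (vanish _ hk)]

theorem radInv_mul_pow {p n k : ℕ} (hp : 1 < p) (hk : k < p ^ n) :
    radInv p k * p ^ n = revDigits p n k := by
  rw [radInv_eq_sum_range hp hk, sum_mul, revDigits]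
  push_cast
  refine sum_congr rfl fun i hi => ?_
  have hpow : (p : ℝ) ^ n = p ^ (i + 1) * p ^ (n - 1 - i) := by
    rw [← pow_add]; congr 1; have := mem_range.1 hi; omega
  rw [hpow]
  field_simp

/- Once `k < p ^ m`, `p ^ m * φ_p(k)` is an integer, so the character only sees `z` modulo
`p ^ m`. -/
theorem exp_radInv_mul_appr_eq {p m m' k : ℕ} [Fact p.Prime] (hk : k < p ^ m) (hm : m ≤ m')
    (z : ℤ_[p]) :
    exp (2 * Real.pi * I * (radInv p k * (z.appr m' : ℝ))) =
      exp (2 * Real.pi * I * (radInv p k * (z.appr m : ℝ))) := by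
  obtain ⟨c, hc⟩ := z.dvd_appr_sub_appr m m' hm
  have happr : (z.appr m' : ℝ) = z.appr m + p ^ m * c := by
    rw [← Nat.cast_pow, ← Nat.cast_mul, ← hc, Nat.cast_sub (z.appr_mono hm)]
    ring
  have hR := radInv_mul_pow (Fact.out : p.Prime).one_lt hk
  refine exp_eq_exp_iff_exists_int.2 ⟨revDigits p m k * c, ?_⟩
  have : radInv p k * z.appr m' = radInv p k * z.appr m + revDigits p m k * c := by
    rw [happr, ← hR]; ring
  have h := congrArg (fun r : ℝ => (r : ℂ)) this
  push_cast at h ⊢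
  linear_combination 2 * Real.pi * I * h

theorem padChar_eq_pow {p n k : ℕ} [Fact p.Prime] (hk : k < p ^ n) (z : ℤ_[p]) :
    padChar p k z = exp (2 * Real.pi * I / (p ^ n : ℕ)) ^ (revDigits p n k * z.appr n) := by
  have hp := (Fact.out : p.Prime).one_lt
  have hmin : k < p ^ min (Nat.log p k + 1) n := by
    rcases min_choice (Nat.log p k + 1) n with h | h <;> rw [h]
    exacts [Nat.lt_pow_succ_log_self hp k, hk]
  rw [padChar, exp_radInv_mul_appr_eq hmin (min_le_left _ _),
    ← exp_radInv_mul_appr_eq hmin (min_le_right _ _), ← exp_nat_mul]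
  have hR := congrArg (fun r : ℝ => (r : ℂ)) (radInv_mul_pow hp hk)
  have : (p : ℂ) ^ n ≠ 0 := pow_ne_zero _ (by exact_mod_cast (Fact.out : p.Prime).ne_zero)
  push_cast at hR ⊢
  rw [← hR]
  field_simp

theorem IsPrimitiveRoot.sum_pow_mul_eq_ite {R : Type*} [CommRing R] [IsDomain R] {ζ : R}
    {n m : ℕ} (hζ : IsPrimitiveRoot ζ n) (hm : m < n) :
    ∑ j ∈ range n, ζ ^ (j * m) = if m = 0 then (n : R) else 0 := by
  split_ifs with h
  · simp [h]
  · have hζm : ζ ^ m ≠ 1 := hζ.pow_ne_one_of_pos_of_lt h hm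
    simp_rw [mul_comm _ m, pow_mul]
    refine eq_zero_of_ne_zero_of_mul_right_eq_zero (sub_ne_zero.2 hζm) ?_
    rw [geom_sum_mul, ← pow_mul, mul_comm, pow_mul, hζ.pow_eq_one, one_pow, sub_self]

theorem padDigit_eq_floor (p : ℕ) (x : ℝ) (r : ℕ) : padDigit p x r = ⌊x * p ^ (r + 1)⌋₊ % p := by
  rw [padDigit, Int.floor_toNat]

theorem Nat.floor_mul_pow_div_pow {p n i : ℕ} (hp : p ≠ 0) (x : ℝ) (hi : i ≤ n) :
    ⌊x * p ^ n⌋₊ / p ^ i = ⌊x * p ^ (n - i)⌋₊ := by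
  rw [← Nat.floor_div_natCast, Nat.cast_pow, mul_div_assoc, div_eq_mul_inv,
    ← pow_sub₀ _ (by exact_mod_cast hp) hi]

theorem revDigits_floor {p : ℕ} (hp : p ≠ 0) (n : ℕ) (x : ℝ) :
    revDigits p n ⌊x * p ^ n⌋₊ = ∑ r ∈ range n, padDigit p x r * p ^ r := by
  rw [revDigits, ← sum_range_reflect]
  refine sum_congr rfl fun r hr => ?_
  have hr := mem_range.1 hr
  rw [Nat.floor_mul_pow_div_pow hp x (by omega), padDigit_eq_floor,
    show n - (n - 1 - r) = r + 1 by omega, show n - 1 - (n - 1 - r) = r by omega]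

theorem PadicInt.summable_mul_p_pow {p : ℕ} [Fact p.Prime] (c : ℕ → ℤ_[p]) :
    Summable fun r => c r * (p : ℤ_[p]) ^ r := by
  have hnorm : ‖(p : ℤ_[p])‖ < 1 := by
    rw [norm_p]; exact inv_lt_one_of_one_lt₀ (by exact_mod_cast (Fact.out : p.Prime).one_lt)
  refine Summable.of_norm_bounded (summable_geometric_of_lt_one (norm_nonneg _) hnorm)
    fun r => ?_
  rw [norm_mul, norm_pow]
  exact mul_le_of_le_one_left (by positivity) (norm_le_one _)

theorem toZModPow_phiPlus {p : ℕ} [Fact p.Prime] (n : ℕ) (x : ℝ) :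
    PadicInt.toZModPow n (phiPlus p x) = (revDigits p n ⌊x * p ^ n⌋₊ : ZMod (p ^ n)) := by
  have hsum := PadicInt.summable_mul_p_pow fun r => (padDigit p x r : ℤ_[p])
  have htail : ∑' r, (padDigit p x (r + n) : ℤ_[p]) * (p : ℤ_[p]) ^ (r + n) =
      (p : ℤ_[p]) ^ n * ∑' r, (padDigit p x (r + n) : ℤ_[p]) * (p : ℤ_[p]) ^ r := by
    rw [← (PadicInt.summable_mul_p_pow _).tsum_mul_left]
    exact tsum_congr fun r => by ring
  rw [phiPlus, ← hsum.sum_add_tsum_nat_add n, htail, revDigits_floor (Fact.out : p.Prime).ne_zero]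
  have hpn : (p : ZMod (p ^ n)) ^ n = 0 := by rw [← Nat.cast_pow, ZMod.natCast_self]
  simp [hpn]

theorem PadicInt.appr_eq_zero_iff {p : ℕ} [Fact p.Prime] (z : ℤ_[p]) (n : ℕ) :
    z.appr n = 0 ↔ PadicInt.toZModPow n z = 0 := by
  change _ ↔ ((z.appr n : ℕ) : ZMod (p ^ n)) = 0
  rw [ZMod.natCast_eq_zero_iff]
  exact ⟨fun h => h ▸ dvd_zero _, fun h => Nat.eq_zero_of_dvd_of_lt h (z.appr_lt n)⟩

theorem Nat.floor_mul_pow_lt_pow {p : ℕ} (hp : p ≠ 0) (n : ℕ) {x : ℝ} (hx : x < 1) :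
    ⌊x * p ^ n⌋₊ < p ^ n := by
  rw [Nat.floor_lt' (pow_ne_zero n hp), Nat.cast_pow]
  exact mul_lt_of_lt_one_left (by positivity) hx

theorem appr_phiPlus_sub_eq_zero_iff {p : ℕ} [Fact p.Prime] (n : ℕ) {x t : ℝ} (hx : x < 1)
    (ht : t < 1) :
    (phiPlus p x - phiPlus p t).appr n = 0 ↔ ⌊x * p ^ n⌋₊ = ⌊t * p ^ n⌋₊ := by
  have hp := (Fact.out : p.Prime).ne_zero
  have hxn := Nat.floor_mul_pow_lt_pow hp n hx
  have htn := Nat.floor_mul_pow_lt_pow hp n ht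
  rw [PadicInt.appr_eq_zero_iff, map_sub, sub_eq_zero, toZModPow_phiPlus, toZModPow_phiPlus,
    ZMod.natCast_eq_natCast_iff', Nat.mod_eq_of_lt (revDigits_lt hxn),
    Nat.mod_eq_of_lt (revDigits_lt htn), revDigits_inj hxn htn]

theorem mem_Ico_floor_div_iff {c x t : ℝ} (hc : 0 < c) :
    t ∈ Set.Ico ((⌊c * x⌋ : ℝ) / c) ((⌊c * x⌋ : ℝ) / c + 1 / c) ↔ ⌊c * t⌋ = ⌊c * x⌋ := by
  rw [Int.floor_eq_iff, Set.mem_Ico, ← add_div, div_le_iff₀ hc, lt_div_iff₀ hc,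
    mul_comm t c]

end

theorem char_sum_indicator_general (p : ℕ) [hp : Fact p.Prime] (a : ℕ)
    (x t : ℝ) (hx : x ∈ Set.Ico (0:ℝ) 1) (ht : t ∈ Set.Ico (0:ℝ) 1) :
    ∑ k ∈ Finset.range (p ^ a), padChar p k (phiPlus p x - phiPlus p t)
      = if t ∈ Set.Ico ((⌊(p : ℝ) ^ a * x⌋ : ℝ) / (p : ℝ) ^ a)
              ((⌊(p : ℝ) ^ a * x⌋ : ℝ) / (p : ℝ) ^ a + 1 / (p : ℝ) ^ a)
        then ((p : ℂ) ^ a) else 0 := by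
  set z := phiPlus p x - phiPlus p t
  set ζ := Complex.exp (2 * Real.pi * Complex.I / (p ^ a : ℕ))
  have hζ : IsPrimitiveRoot ζ (p ^ a) :=
    Complex.isPrimitiveRoot_exp (p ^ a) (pow_ne_zero a hp.out.ne_zero)
  have hpa : (0 : ℝ) < p ^ a := by have := hp.out.pos; positivity
  have hcond : t ∈ Set.Ico ((⌊(p : ℝ) ^ a * x⌋ : ℝ) / (p : ℝ) ^ a)
      ((⌊(p : ℝ) ^ a * x⌋ : ℝ) / (p : ℝ) ^ a + 1 / (p : ℝ) ^ a) ↔ z.appr a = 0 := by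
    rw [mem_Ico_floor_div_iff hpa, appr_phiPlus_sub_eq_zero_iff a hx.2 ht.2,
      ← Int.natCast_floor_eq_floor (mul_nonneg hpa.le ht.1),
      ← Int.natCast_floor_eq_floor (mul_nonneg hpa.le hx.1), Nat.cast_inj, mul_comm x,
      mul_comm t, eq_comm]
  calc ∑ k ∈ Finset.range (p ^ a), padChar p k z
      = ∑ k ∈ Finset.range (p ^ a), ζ ^ (revDigits p a k * z.appr a) :=
        Finset.sum_congr rfl fun k hk => padChar_eq_pow (Finset.mem_range.1 hk) z
    _ = ∑ j ∈ Finset.range (p ^ a), ζ ^ (j * z.appr a) :=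
        sum_range_revDigits p a fun j => ζ ^ (j * z.appr a)
    _ = if z.appr a = 0 then ((p ^ a : ℕ) : ℂ) else 0 := hζ.sum_pow_mul_eq_ite (z.appr_lt a)
    _ = _ := by rw [if_congr hcond.symm rfl rfl, Nat.cast_pow]

theorem char_sum_indicator (p : ℕ) [hp : Fact p.Prime] (a : ℕ) (ha : 1 ≤ a)
    (x t : ℝ) (hx : x ∈ Set.Ico (0:ℝ) 1) (ht : t ∈ Set.Ico (0:ℝ) 1) :
    ∑ k ∈ Finset.range (p ^ a), padChar p k (phiPlus p x - phiPlus p t)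
      = if t ∈ Set.Ico ((⌊(p : ℝ) ^ a * x⌋ : ℝ) / (p : ℝ) ^ a)
              ((⌊(p : ℝ) ^ a * x⌋ : ℝ) / (p : ℝ) ^ a + 1 / (p : ℝ) ^ a)
        then ((p : ℂ) ^ a) else 0 :=
  char_sum_indicator_general p (hp := hp) a x t hx ht
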